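/- Let 𝕊 ⊆ ℝ^ℓ (ℓ ≥ 2) be a state space, let S ⊆ 𝕊 be nonempty, let V ⊆ ℝ^ℓ be a linear subspace, and let Π : ℝ^ℓ → ℝ^ℓ be the orthogonal projection onto V. Then S is observationally complete for Π if and only if S is observationally complete for every linear map M : ℝ^ℓ → ℝⁿ (for every n) whose support (ker M)^⊥ equals V. -/

import Mathlib

open MeasureTheory Metric Set

noncomputable section

/-- `Euc n` is the Euclidean space `ℝⁿ`. -/
abbrev Euc (n : ℕ) : Type := EuclideanSpace ℝ (Fin n)

/-- A state space of linear dimension `ℓ`: a compact convex set contained in (and affinely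
spanning) an affine hyperplane not through the origin, here written as `{x | f x = 1}`
for a nonzero linear functional `f`. -/
def IsStateSpace {ℓ : ℕ} (𝕊 : Set (Euc ℓ)) : Prop :=
  IsCompact 𝕊 ∧ Convex ℝ 𝕊 ∧
    ∃ f : Euc ℓ →ₗ[ℝ] ℝ, f ≠ 0 ∧
      (affineSpan ℝ 𝕊 : Set (Euc ℓ)) = {x | f x = 1}

/-- `R` is admissible for the data set `X` (w.r.t. the state space `𝕊`): it is the image of `𝕊`
under some linear map and satisfies `X ⊆ R ⊆ aff X`. -/
def Admissible {ℓ n : ℕ} (𝕊 : Set (Euc ℓ)) (X R : Set (Euc n)) : Prop :=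
  (∃ M : Euc ℓ →ₗ[ℝ] Euc n, R = M '' 𝕊) ∧ X ⊆ R ∧ R ⊆ (affineSpan ℝ X : Set (Euc n))

/-- Data-driven inference: the admissible sets for `X` of minimal `d`-dimensional Hausdorff
measure, where `d = dim aff X`. -/
def ddi {ℓ n : ℕ} (X : Set (Euc n)) (𝕊 : Set (Euc ℓ)) : Set (Set (Euc n)) :=
  {R | Admissible 𝕊 X R ∧ ∀ R' : Set (Euc n), Admissible 𝕊 X R' →
      μH[(Module.finrank ℝ (affineSpan ℝ X).direction : ℝ)] R ≤
        μH[(Module.finrank ℝ (affineSpan ℝ X).direction : ℝ)] R'}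

/-- A (hyper)-ellipsoid state space in `ℝ^ℓ`: the image of the closed unit ball of `ℝ^(ℓ-1)`
under an injective affine map. -/
def IsHyperEllipsoid {ℓ : ℕ} (𝕊 : Set (Euc ℓ)) : Prop :=
  ∃ F : Euc (ℓ - 1) →ᵃ[ℝ] Euc ℓ, Function.Injective F ∧ 𝕊 = F '' closedBall 0 1

/-- `S` is observationally complete for the measurement `M` (w.r.t. state space `𝕊`). -/
def ObsComplete {ℓ n : ℕ} (𝕊 S : Set (Euc ℓ)) (M : Euc ℓ →ₗ[ℝ] Euc n) : Prop :=
  ddi (M '' S) 𝕊 = {M '' 𝕊}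

/-!
Observational completeness for `M` depends only on `ker M`. If `ker M = ker P`, then `M = A ∘ P`
for a linear `A` having a linear left inverse on `range P`. Hence `R ↦ A '' R` is a bijection from
the sets admissible for `P '' S` onto those admissible for `M '' S`, and on the affine span of
`P '' S` the map `A` multiplies the Hausdorff measure of the relevant dimension by a constant in
`(0, ∞)` (a norm determinant), so it carries minimizers to minimizers. The orthogonal projection
onto `V` has kernel `Vᗮ`, the kernel of every `M` with support `V`.
-/

open Module
open scoped ENNReal

theorem LinearMap.exists_comp_eq_of_ker_le {K V W U : Type*} [DivisionRing K] [AddCommGroup V]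
    [Module K V] [AddCommGroup W] [Module K W] [AddCommGroup U] [Module K U]
    (P : V →ₗ[K] W) (M : V →ₗ[K] U) (h : LinearMap.ker P ≤ LinearMap.ker M) :
    ∃ A : W →ₗ[K] U, A ∘ₗ P = M := by
  obtain ⟨A, hA⟩ := LinearMap.exists_extend
    ((LinearMap.ker P).liftQ M h ∘ₗ P.quotKerEquivRange.symm.toLinearMap)
  refine ⟨A, LinearMap.ext fun x => ?_⟩
  simpa using LinearMap.congr_fun hA ⟨P x, LinearMap.mem_range_self P x⟩

section AffineSpanImage

variable {k V W : Type*} [DivisionRing k] [AddCommGroup V] [Module k V] [AddCommGroup W]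
  [Module k W]

theorem LinearMap.image_affineSpan (f : V →ₗ[k] W) (s : Set V) :
    f '' (affineSpan k s : Set V) = affineSpan k (f '' s) := by
  simpa [AffineSubspace.coe_map] using
    congrArg ((↑) : AffineSubspace k W → Set W) (AffineSubspace.map_span f.toAffineMap s)

theorem LinearMap.finrank_direction_affineSpan_image_le [FiniteDimensional k V] (f : V →ₗ[k] W)
    (s : Set V) :
    finrank k (affineSpan k (f '' s)).direction ≤ finrank k (affineSpan k s).direction := by
  rw [← f.coe_toAffineMap, ← AffineSubspace.map_span, AffineSubspace.map_direction]
  exact Submodule.finrank_map_le _ _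

end AffineSpanImage

section HausdorffScaling

variable {E F : Type*} [NormedAddCommGroup E] [InnerProductSpace ℝ E] [FiniteDimensional ℝ E]
  [MeasurableSpace E] [BorelSpace E] [NormedAddCommGroup F] [InnerProductSpace ℝ F]
  [MeasurableSpace F] [BorelSpace F]

theorem AffineSubspace.exists_hausdorffMeasure_image_eq_mul (T : E →ₗ[ℝ] F)
    (W : AffineSubspace ℝ E) (hT : Set.InjOn T W) :
    ∃ c : ℝ≥0∞, c ≠ 0 ∧ c ≠ ∞ ∧ ∀ s ⊆ (W : Set E),
      μH[finrank ℝ W.direction] (T '' s) = c * μH[finrank ℝ W.direction] s := by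
  rcases W.eq_bot_or_nonempty with rfl | ⟨p, hp⟩
  · exact ⟨1, one_ne_zero, ENNReal.one_ne_top, fun s hs => by
      simp [Set.subset_empty_iff.1 hs]⟩
  set f : W.direction →ₗ[ℝ] F := T ∘ₗ W.direction.subtype
  have hf : LinearMap.ker f = ⊥ := by
    refine LinearMap.ker_eq_bot'.2 fun v hv => Subtype.ext ?_
    have : T (v + p) = T p := by simpa [f] using hv
    simpa using hT (AffineSubspace.vadd_mem_of_mem_direction v.2 hp) hp this
  refine ⟨ENNReal.ofReal f.normDet, ?_, ENNReal.ofReal_ne_top, fun s hs => ?_⟩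
  · exact (ENNReal.ofReal_pos.2 <| f.normDet_nonneg.lt_of_ne' <| by
      simpa [LinearMap.normDet_eq_zero_iff_ker_ne_bot] using hf).ne'
  obtain ⟨s₀, rfl⟩ :
      ∃ s₀ : Set W.direction, s = IsometryEquiv.addRight p '' (Subtype.val '' s₀) := by
    refine ⟨Subtype.val ⁻¹' ((· - p) '' s), ?_⟩
    have hsub : (· - p) '' s ⊆ Set.range (Subtype.val : W.direction → E) := by
      rintro _ ⟨x, hx, rfl⟩
      exact ⟨⟨x - p, AffineSubspace.vsub_mem_direction (hs hx) hp⟩, rfl⟩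
    rw [Set.image_preimage_eq_of_subset hsub, Set.image_image]
    simp
  have hTs : T '' (IsometryEquiv.addRight p '' (Subtype.val '' s₀)) =
      IsometryEquiv.addRight (T p) '' (f '' s₀) := by
    simp only [Set.image_image]
    simp [f]
  rw [hTs, IsometryEquiv.hausdorffMeasure_image, f.hausdorffMeasure_image,
    IsometryEquiv.hausdorffMeasure_image,
    isometry_subtype_coe.hausdorffMeasure_image (Or.inl (Nat.cast_nonneg _))]

end HausdorffScaling

section Admissible

variable {ℓ m n : ℕ} {𝕊 : Set (Euc ℓ)}

theorem Admissible.image {X R : Set (Euc m)} (h : Admissible 𝕊 X R) (A : Euc m →ₗ[ℝ] Euc n) :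
    Admissible 𝕊 (A '' X) (A '' R) := by
  obtain ⟨⟨N, rfl⟩, hXR, hRX⟩ := h
  refine ⟨⟨A ∘ₗ N, by rw [LinearMap.coe_comp, Set.image_comp]⟩, Set.image_mono hXR, ?_⟩
  rw [← LinearMap.image_affineSpan]
  exact Set.image_mono hRX

theorem ddi_image {X : Set (Euc m)} {U : Submodule ℝ (Euc m)} (hX : X ⊆ U)
    {A : Euc m →ₗ[ℝ] Euc n} {B : Euc n →ₗ[ℝ] Euc m} (hBA : Set.LeftInvOn B A U) :
    ddi (A '' X) 𝕊 = (A '' ·) '' ddi X 𝕊 := by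
  have haff : (affineSpan ℝ X : Set (Euc m)) ⊆ U :=
    affineSpan_subset_span.trans (Submodule.span_le.2 hX)
  have hd : finrank ℝ (affineSpan ℝ (A '' X)).direction = finrank ℝ (affineSpan ℝ X).direction :=
    (A.finrank_direction_affineSpan_image_le X).antisymm <| by
      have := B.finrank_direction_affineSpan_image_le (A '' X)
      rwa [hBA.image_image' hX] at this
  obtain ⟨c, hc0, hctop, hc⟩ :=
    (affineSpan ℝ X).exists_hausdorffMeasure_image_eq_mul A (hBA.injOn.mono haff)
  have hback : ∀ R', Admissible 𝕊 (A '' X) R' →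
      Admissible 𝕊 X (B '' R') ∧ A '' (B '' R') = R' := by
    intro R' hR'
    refine ⟨by simpa only [hBA.image_image' hX] using hR'.image B, ?_⟩
    refine Set.LeftInvOn.image_image' hBA.rightInvOn_image (hR'.2.2.trans ?_)
    rw [← LinearMap.image_affineSpan]
    exact Set.image_mono haff
  ext R'
  simp only [ddi, hd, Set.mem_image]
  constructor
  · rintro ⟨hR', hmin⟩
    obtain ⟨hR, hAR⟩ := hback R' hR'
    refine ⟨B '' R', ⟨hR, fun R₁ hR₁ => ?_⟩, hAR⟩
    have := hmin _ (hR₁.image A)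
    rwa [← hAR, hc _ hR.2.2, hc _ hR₁.2.2, ENNReal.mul_le_mul_iff_right hc0 hctop] at this
  · rintro ⟨R, ⟨hR, hmin⟩, rfl⟩
    refine ⟨hR.image A, fun R' hR' => ?_⟩
    obtain ⟨hBR', hAR'⟩ := hback R' hR'
    rw [← hAR', hc _ hR.2.2, hc _ hBR'.2.2]
    exact mul_le_mul_right (hmin _ hBR') c

end Admissible

theorem ObsComplete.of_ker_eq {ℓ m n : ℕ} {𝕊 S : Set (Euc ℓ)} {P : Euc ℓ →ₗ[ℝ] Euc m}
    {M : Euc ℓ →ₗ[ℝ] Euc n} (hP : ObsComplete 𝕊 S P)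
    (hker : LinearMap.ker M = LinearMap.ker P) : ObsComplete 𝕊 S M := by
  obtain ⟨A, rfl⟩ := P.exists_comp_eq_of_ker_le M hker.ge
  obtain ⟨B, hB⟩ := (A ∘ₗ P).exists_comp_eq_of_ker_le P hker.le
  have hBA : Set.LeftInvOn B A (LinearMap.range P) := by
    rintro _ ⟨x, rfl⟩
    exact LinearMap.congr_fun hB x
  unfold ObsComplete at hP ⊢
  rw [LinearMap.coe_comp, Set.image_comp, Set.image_comp,
    ddi_image (Set.image_subset_range _ _) hBA, hP, Set.image_singleton]

theorem stmt_7_general {ℓ : ℕ} (𝕊 : Set (Euc ℓ)) (S : Set (Euc ℓ))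
    (V : Submodule ℝ (Euc ℓ)) (Prj : Euc ℓ →ₗ[ℝ] Euc ℓ)
    (hPrj : ∀ x : Euc ℓ, Prj x = (V.orthogonalProjectionOnto x : Euc ℓ)) :
    ObsComplete 𝕊 S Prj ↔
      ∀ (n : ℕ) (M : Euc ℓ →ₗ[ℝ] Euc n), (LinearMap.ker M)ᗮ = V →
        ObsComplete 𝕊 S M := by
  have hker : LinearMap.ker Prj = Vᗮ := by
    ext x
    rw [LinearMap.mem_ker, hPrj, ZeroMemClass.coe_eq_zero, ← V.ker_orthogonalProjectionOnto]
    rfl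
  refine ⟨fun h n M hM => h.of_ker_eq ?_, fun h => h ℓ Prj ?_⟩
  · rw [hker, ← hM, Submodule.orthogonal_orthogonal]
  · rw [hker, Submodule.orthogonal_orthogonal]

theorem stmt_7 {ℓ : ℕ} (hℓ : 2 ≤ ℓ) (𝕊 : Set (Euc ℓ)) (hS : IsStateSpace 𝕊)
    (S : Set (Euc ℓ)) (hsub : S ⊆ 𝕊) (hne : S.Nonempty)
    (V : Submodule ℝ (Euc ℓ)) (Prj : Euc ℓ →ₗ[ℝ] Euc ℓ)
    (hPrj : ∀ x : Euc ℓ, Prj x = (V.orthogonalProjectionOnto x : Euc ℓ)) :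
    ObsComplete 𝕊 S Prj ↔
      ∀ (n : ℕ) (M : Euc ℓ →ₗ[ℝ] Euc n), (LinearMap.ker M)ᗮ = V →
        ObsComplete 𝕊 S M :=
  stmt_7_general 𝕊 S V Prj hPrj
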